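/- arXiv:1703.08889 — 3 statements merged into one kernel-verified Lean document; each statement's English description precedes it below -/
import Mathlib

section
/- Let A be a commutative ℂ-algebra and T_A = Der_ℂ(A). Let [·,·]' be a ℂ-bilinear bracket making A ⊕ T_A a Lie algebra over ℂ such that: (i) [ι(a), ι(b)]' = 0 for all a, b ∈ A; (ii) σ([x,y]') = [σ(x), σ(y)] for all x, y ∈ A ⊕ T_A; (iii) [x, b·y]' = σ(x)(b)·y + b·[x,y]' for all x, y ∈ A ⊕ T_A and b ∈ A; (iv) [x, ι(b)]' = ι(σ(x)(b)) for all x ∈ A ⊕ T_A and b ∈ A. Then there exists a unique closed 2-form β on T_A such that [·,·]' = [·,·]_β, i.e. [(a,ξ),(b,τ)]' = (ξ(b) − τ(a) + β(ξ,τ), [ξ,τ]) for all a,b ∈ A and ξ,τ ∈ T_A. -/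
/-- The bracket `[(a,ξ),(b,τ)]_β = (ξ(b) − τ(a) + β(ξ,τ), [ξ,τ])` on `A ⊕ T_A`. -/
def brkt {A : Type*} [CommRing A] [Algebra ℂ A]
    (β : Derivation ℂ A A → Derivation ℂ A A → A)
    (x y : A × Derivation ℂ A A) : A × Derivation ℂ A A :=
  (x.2 y.1 - y.2 x.1 + β x.2 y.2, ⁅x.2, y.2⁆)

/-- `β` is a 2-form: `A`-bilinear and alternating. -/
def IsTwoForm {A : Type*} [CommRing A] [Algebra ℂ A]
    (β : Derivation ℂ A A → Derivation ℂ A A → A) : Prop :=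
  (∀ ξ₁ ξ₂ τ, β (ξ₁ + ξ₂) τ = β ξ₁ τ + β ξ₂ τ) ∧
  (∀ ξ τ₁ τ₂, β ξ (τ₁ + τ₂) = β ξ τ₁ + β ξ τ₂) ∧
  (∀ (b : A) ξ τ, β (b • ξ) τ = b * β ξ τ) ∧
  (∀ (b : A) ξ τ, β ξ (b • τ) = b * β ξ τ) ∧
  (∀ ξ, β ξ ξ = 0)

/-- `β` is closed. -/
def IsClosed2 {A : Type*} [CommRing A] [Algebra ℂ A]
    (β : Derivation ℂ A A → Derivation ℂ A A → A) : Prop :=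
  ∀ ξ τ χ : Derivation ℂ A A,
    ξ (β τ χ) - τ (β ξ χ) + χ (β ξ τ)
      - β ⁅ξ, τ⁆ χ + β ⁅ξ, χ⁆ τ - β ⁅τ, χ⁆ ξ = 0

/-!
The form is read off the bracket of pure derivations: `β(ξ, τ)` is the `A`-component of
`[(0, ξ), (0, τ)]'`. Splitting `(a, ξ) = ι(a) + (0, ξ)`, axiom (iv) and antisymmetry compute
the remaining three terms of the bilinear expansion, which gives `[·,·]' = [·,·]_β`.
Bilinearity of `br` and the Leibniz rule (iii) make `β` an `A`-bilinear 2-form, and the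
`A`-component of the Jacobi identity for three pure derivations is, after antisymmetry, exactly
closedness of `β`. Uniqueness holds because `β(ξ, τ)` is the `A`-component of `[(0, ξ), (0, τ)]_β`.
-/

section BracketForm

variable {A : Type*} [CommRing A] [Algebra ℂ A]
  (br : (A × Derivation ℂ A A) →ₗ[ℂ] (A × Derivation ℂ A A) →ₗ[ℂ] (A × Derivation ℂ A A))

def bracketForm (ξ τ : Derivation ℂ A A) : A :=
  (br (0, ξ) (0, τ)).1

variable {br}

lemma bracket_zero_zero_eq (hii : ∀ x y, (br x y).2 = ⁅x.2, y.2⁆) (ξ τ : Derivation ℂ A A) :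
    br (0, ξ) (0, τ) = (bracketForm br ξ τ, ⁅ξ, τ⁆) :=
  Prod.ext rfl (hii _ _)

lemma bracket_mk_right (hiv : ∀ (x : A × Derivation ℂ A A) (b : A), br x (b, 0) = (x.2 b, 0))
    (x : A × Derivation ℂ A A) (c : A) (τ : Derivation ℂ A A) :
    br x (c, τ) = (x.2 c, 0) + br x (0, τ) := by
  rw [← hiv, ← map_add, Prod.mk_add_mk, add_zero, zero_add]

lemma bracket_eq_brkt (halt : br.IsAlt) (hii : ∀ x y, (br x y).2 = ⁅x.2, y.2⁆)
    (hiv : ∀ (x : A × Derivation ℂ A A) (b : A), br x (b, 0) = (x.2 b, 0))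
    (a b : A) (ξ τ : Derivation ℂ A A) :
    br (a, ξ) (b, τ) = brkt (bracketForm br) (a, ξ) (b, τ) := by
  rw [bracket_mk_right hiv, ← halt.neg (0, τ), bracket_mk_right hiv, neg_add,
    halt.neg (0, τ), bracket_zero_zero_eq hii]
  ext <;> simp [brkt]
  ring

lemma bracketForm_swap (halt : br.IsAlt) (ξ τ : Derivation ℂ A A) :
    bracketForm br τ ξ = -bracketForm br ξ τ := by
  simp [bracketForm, ← halt.neg (0, ξ)]

lemma bracketForm_neg_left (ξ τ : Derivation ℂ A A) :
    bracketForm br (-ξ) τ = -bracketForm br ξ τ := by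
  simp only [bracketForm, ← LinearMap.inr_apply (R := ℂ) (M := A), map_neg, LinearMap.neg_apply,
    Prod.fst_neg]

lemma isTwoForm_bracketForm (halt : br.IsAlt)
    (hiii : ∀ (x y : A × Derivation ℂ A A) (b : A), br x (b • y) = (x.2 b) • y + b • br x y) :
    IsTwoForm (bracketForm br) := by
  have smul_right : ∀ (b : A) ξ τ, bracketForm br ξ (b • τ) = b * bracketForm br ξ τ := by
    intro b ξ τ
    simpa [bracketForm] using congrArg Prod.fst (hiii (0, ξ) (0, τ) b)
  refine ⟨fun ξ₁ ξ₂ τ => ?_, fun ξ τ₁ τ₂ => ?_, fun b ξ τ => ?_, smul_right, fun ξ => ?_⟩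
  · simp only [bracketForm, ← LinearMap.inr_apply (R := ℂ) (M := A), map_add,
      LinearMap.add_apply, Prod.fst_add]
  · simp only [bracketForm, ← LinearMap.inr_apply (R := ℂ) (M := A), map_add, Prod.fst_add]
  · rw [bracketForm_swap halt, smul_right, bracketForm_swap halt τ ξ, mul_neg]
  · simp [bracketForm, halt.self_eq_zero]

lemma isClosed2_bracketForm (halt : br.IsAlt)
    (hjac : ∀ x y z, br x (br y z) + br y (br z x) + br z (br x y) = 0)
    (hii : ∀ x y, (br x y).2 = ⁅x.2, y.2⁆)
    (hiv : ∀ (x : A × Derivation ℂ A A) (b : A), br x (b, 0) = (x.2 b, 0)) :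
    IsClosed2 (bracketForm br) := by
  intro ξ τ χ
  have expand : ∀ μ ν ρ : Derivation ℂ A A, (br (0, μ) (br (0, ν) (0, ρ))).1 =
      μ (bracketForm br ν ρ) + bracketForm br μ ⁅ν, ρ⁆ := by
    intro μ ν ρ
    rw [bracket_zero_zero_eq hii, bracket_mk_right hiv]
    rfl
  have jacobi := congrArg Prod.fst (hjac (0, ξ) (0, τ) (0, χ))
  simp only [Prod.fst_add, Prod.fst_zero, expand] at jacobi
  rw [bracketForm_swap halt ⁅τ, χ⁆, bracketForm_swap halt ξ χ, map_neg,
    bracketForm_swap halt ⁅χ, ξ⁆, ← lie_skew χ ξ, bracketForm_neg_left,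
    bracketForm_swap halt ⁅ξ, τ⁆] at jacobi
  linear_combination jacobi

lemma eq_bracketForm {β : Derivation ℂ A A → Derivation ℂ A A → A}
    (h : ∀ (a b : A) (ξ τ : Derivation ℂ A A), br (a, ξ) (b, τ) = brkt β (a, ξ) (b, τ)) :
    β = bracketForm br := by
  funext ξ τ
  simp [bracketForm, h, brkt]

end BracketForm

theorem stmt2_general {A : Type*} [CommRing A] [Algebra ℂ A]
    (br : (A × Derivation ℂ A A) →ₗ[ℂ] (A × Derivation ℂ A A) →ₗ[ℂ] (A × Derivation ℂ A A))
    (halt : ∀ x, br x x = 0)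
    (hjac : ∀ x y z, br x (br y z) + br y (br z x) + br z (br x y) = 0)
    (hii : ∀ x y, (br x y).2 = ⁅x.2, y.2⁆)
    (hiii : ∀ (x y : A × Derivation ℂ A A) (b : A),
        br x (b • y) = (x.2 b) • y + b • br x y)
    (hiv : ∀ (x : A × Derivation ℂ A A) (b : A), br x (b, 0) = (x.2 b, 0)) :
    ∃! β : Derivation ℂ A A → Derivation ℂ A A → A,
      IsTwoForm β ∧ IsClosed2 β ∧
      ∀ (a b : A) (ξ τ : Derivation ℂ A A), br (a, ξ) (b, τ) = brkt β (a, ξ) (b, τ) :=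
  ⟨bracketForm br,
    ⟨isTwoForm_bracketForm halt hiii, isClosed2_bracketForm halt hjac hii hiv,
      bracket_eq_brkt halt hii hiv⟩,
    fun _ ⟨_, _, h⟩ => eq_bracketForm h⟩

/-- a ℂ-bilinear Lie bracket on `A ⊕ T_A` satisfying (i)–(iv) is `[·,·]_β`
for a unique closed 2-form `β`. -/
theorem stmt2 {A : Type*} [CommRing A] [Algebra ℂ A]
    (br : (A × Derivation ℂ A A) →ₗ[ℂ] (A × Derivation ℂ A A) →ₗ[ℂ] (A × Derivation ℂ A A))
    (halt : ∀ x, br x x = 0)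
    (hjac : ∀ x y z, br x (br y z) + br y (br z x) + br z (br x y) = 0)
    (hi : ∀ a b : A, br (a, 0) (b, 0) = 0)
    (hii : ∀ x y, (br x y).2 = ⁅x.2, y.2⁆)
    (hiii : ∀ (x y : A × Derivation ℂ A A) (b : A),
        br x (b • y) = (x.2 b) • y + b • br x y)
    (hiv : ∀ (x : A × Derivation ℂ A A) (b : A), br x (b, 0) = (x.2 b, 0)) :
    ∃! β : Derivation ℂ A A → Derivation ℂ A A → A,
      IsTwoForm β ∧ IsClosed2 β ∧
      ∀ (a b : A) (ξ τ : Derivation ℂ A A), br (a, ξ) (b, τ) = brkt β (a, ξ) (b, τ) :=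
  stmt2_general br halt hjac hii hiii hiv
end

section
/- Let A be a commutative ℂ-algebra and β, γ closed 2-forms on T_A = Der_ℂ(A). There exists an A-module map f : A ⊕ T_A → A ⊕ T_A with f ∘ ι = ι and σ ∘ f = σ that is a Lie algebra isomorphism from (A ⊕ T_A, [·,·]_β) to (A ⊕ T_A, [·,·]_γ) if and only if there exists a 1-form α with dα = β − γ. In other words, the isomorphism classes of split Picard–Lie A-algebroids are in bijection with closed 2-forms modulo differentials of 1-forms. -/
/-! The maps in question are exactly the shears `(a, ξ) ↦ (a + α ξ, ξ)` by a 1-form `α`, and a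
shear carries `[·,·]_β` to `[·,·]_γ` precisely when `dα = β − γ`: comparing first components of
`f [x, y]_β` and `[f x, f y]_γ`, everything cancels except `dα(ξ, τ) − β(ξ, τ) + γ(ξ, τ)`. -/

section Shear

variable {R M N : Type*} [Semiring R] [AddCommGroup M] [AddCommGroup N] [Module R M] [Module R N]

def shear (α : M →ₗ[R] N) : (N × M) →ₗ[R] (N × M) :=
  LinearMap.id + LinearMap.inl R N M ∘ₗ α ∘ₗ LinearMap.snd R N M

@[simp]
theorem shear_apply (α : M →ₗ[R] N) (x : N × M) : shear α x = (x.1 + α x.2, x.2) := by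
  simp [shear, Prod.ext_iff]

theorem shear_bijective (α : M →ₗ[R] N) : Function.Bijective (shear α) :=
  Function.bijective_iff_has_inverse.2
    ⟨shear (-α), fun x => by simp, fun x => by simp⟩

theorem eq_shear_of_fix_inl_of_snd_eq (f : (N × M) →ₗ[R] (N × M))
    (hinl : ∀ a : N, f (a, 0) = (a, 0)) (hsnd : ∀ x, (f x).2 = x.2) :
    f = shear (LinearMap.fst R N M ∘ₗ f ∘ₗ LinearMap.inr R N M) := by
  refine LinearMap.ext fun x => ?_
  have hx : x = (x.1, 0) + (0, x.2) := by simp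
  refine Prod.ext ?_ (by simpa using hsnd x)
  conv_lhs => rw [hx, map_add, hinl]
  simp

end Shear

theorem shear_brkt_eq_iff {A : Type*} [CommRing A] [Algebra ℂ A]
    (α : Derivation ℂ A A →ₗ[A] A) (β γ : Derivation ℂ A A → Derivation ℂ A A → A)
    (x y : A × Derivation ℂ A A) :
    shear α (brkt β x y) = brkt γ (shear α x) (shear α y) ↔
      x.2 (α y.2) - y.2 (α x.2) - α ⁅x.2, y.2⁆ = β x.2 y.2 - γ x.2 y.2 := by
  simp only [shear_apply, brkt, map_add, Prod.ext_iff, and_true]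
  constructor <;> intro h <;> linear_combination -h

theorem stmt5_general {A : Type*} [CommRing A] [Algebra ℂ A]
    (β γ : Derivation ℂ A A → Derivation ℂ A A → A) :
    (∃ f : (A × Derivation ℂ A A) →ₗ[A] (A × Derivation ℂ A A),
        (∀ a : A, f (a, 0) = (a, 0)) ∧ (∀ x, (f x).2 = x.2) ∧
        Function.Bijective f ∧
        (∀ x y, f (brkt β x y) = brkt γ (f x) (f y)))
      ↔ ∃ α : Derivation ℂ A A →ₗ[A] A,
          ∀ ξ τ : Derivation ℂ A A,
            ξ (α τ) - τ (α ξ) - α ⁅ξ, τ⁆ = β ξ τ - γ ξ τ := by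
  constructor
  · rintro ⟨f, hinl, hsnd, -, hbrkt⟩
    rw [eq_shear_of_fix_inl_of_snd_eq f hinl hsnd] at hbrkt
    exact ⟨_, fun ξ τ => (shear_brkt_eq_iff _ β γ (0, ξ) (0, τ)).1 (hbrkt _ _)⟩
  · rintro ⟨α, hα⟩
    exact ⟨shear α, by simp, by simp, shear_bijective α,
      fun x y => (shear_brkt_eq_iff α β γ x y).2 (hα _ _)⟩

/-- the split Picard–Lie algebroids `T_A(β)` and `T_A(γ)` are isomorphic
(via an `A`-module map commuting with `ι` and `σ`) iff `β − γ = dα` for some 1-form `α`. -/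
theorem stmt5 {A : Type*} [CommRing A] [Algebra ℂ A]
    (β γ : Derivation ℂ A A → Derivation ℂ A A → A)
    (hβ : IsTwoForm β) (hβc : IsClosed2 β) (hγ : IsTwoForm γ) (hγc : IsClosed2 γ) :
    (∃ f : (A × Derivation ℂ A A) →ₗ[A] (A × Derivation ℂ A A),
        (∀ a : A, f (a, 0) = (a, 0)) ∧ (∀ x, (f x).2 = x.2) ∧
        Function.Bijective f ∧
        (∀ x y, f (brkt β x y) = brkt γ (f x) (f y)))
      ↔ ∃ α : Derivation ℂ A A →ₗ[A] A,
          ∀ ξ τ : Derivation ℂ A A,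
            ξ (α τ) - τ (α ξ) - α ⁅ξ, τ⁆ = β ξ τ - γ ξ τ :=
  stmt5_general β γ
end

section
/- Let (L, ∂, {μ_n}) be a Lie* algebra. On the quotient ℂ-vector space Lie(L) := (L ⊗ ℂ[t,t⁻¹]) / Im(∂ ⊗ 1 + 1 ⊗ d/dt), the Borcherds bracket [a_[n], b_[m]] := Σ_{j≥0} C(n,j)·(μ_j(a,b))_[n+m−j] (a finite sum) is well-defined — i.e. independent of representatives — and makes Lie(L) a Lie algebra over ℂ (the bracket is alternating and satisfies the Jacobi identity). -/
/-- A Lie* algebra (translation-invariant form; equivalently a Lie conformal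
algebra over ℂ). -/
structure LieStar (L : Type*) [AddCommGroup L] [Module ℂ L] where
  D : L →ₗ[ℂ] L
  mu : ℕ → L →ₗ[ℂ] L →ₗ[ℂ] L
  finiteness : ∀ a b : L, ∃ N : ℕ, ∀ n ≥ N, mu n a b = 0
  sesq_left : ∀ (n : ℕ) (a b : L), mu n (D a) b = (-(n : ℂ)) • mu (n - 1) a b
  sesq_right : ∀ (n : ℕ) (a b : L),
      mu n a (D b) = D (mu n a b) + (n : ℂ) • mu (n - 1) a b
  antisym : ∀ (n : ℕ) (a b : L),
      mu n a b = ∑ᶠ j : ℕ,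
        ((-1 : ℂ) ^ (n + j + 1) * ((j.factorial : ℂ))⁻¹) • ((D ^ j) (mu (n + j) b a))
  jacobi : ∀ (n m : ℕ) (a b c : L),
      mu n a (mu m b c) - mu m b (mu n a c)
        = ∑ᶠ j : ℕ, ((n.choose j : ℂ)) • mu (n + m - j) (mu j a b) c

/-- The operator `∂ ⊗ 1 + 1 ⊗ d/dt` on `L ⊗ ℂ[t,t⁻¹]`, realized on the model
`ℤ →₀ L` in which `a ⊗ tⁿ` is `Finsupp.single n a` (so `a ⊗ tⁿ ↦ ∂a ⊗ tⁿ + n·a ⊗ tⁿ⁻¹`). -/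
noncomputable def lieTop {L : Type*} [AddCommGroup L] [Module ℂ L] (D : L →ₗ[ℂ] L) :
    (ℤ →₀ L) →ₗ[ℂ] (ℤ →₀ L) :=
  Finsupp.lsum ℂ fun n : ℤ => (Finsupp.lsingle n).comp D + (n : ℂ) • Finsupp.lsingle (n - 1)

/-- The class `a_[n]` of `a ⊗ tⁿ` in `Lie(L) = (L ⊗ ℂ[t,t⁻¹]) / Im(∂⊗1 + 1⊗d/dt)`. -/
noncomputable def lieEl {L : Type*} [AddCommGroup L] [Module ℂ L] (D : L →ₗ[ℂ] L)
    (n : ℤ) (a : L) : (ℤ →₀ L) ⧸ LinearMap.range (lieTop D) :=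
  (LinearMap.range (lieTop D)).mkQ (Finsupp.single n a)

/-- The generalized binomial coefficient `C(n,j) = n(n−1)⋯(n−j+1)/j!` for `n : ℤ`. -/
noncomputable def genChoose (n : ℤ) (j : ℕ) : ℂ :=
  ((Finset.range j).prod fun i => (n : ℂ) - (i : ℂ)) / (j.factorial : ℂ)

/-!
On the model `ℤ →₀ L` of `L ⊗ ℂ[t,t⁻¹]` (with `T = ∂ ⊗ 1 + 1 ⊗ d/dt`), the Borcherds bracket
satisfies `[x, T y] = T [x, y]` by right sesquilinearity, and the Leibniz identity
`[x, [y, z]] = [[x, y], z] + [y, [x, z]]` on the nose: after the trinomial revision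
`C(n,s) C(s,j) = C(n,j) C(n-j,s-j)` the Jacobi axiom and the Chu–Vandermonde identity rewrite both
sides as the same triple sum. Antisymmetry only holds modulo `Im T`, where
`(∂ᵏc)_[t] = (-1)ᵏ k! C(t,k) c_[t-k]`; this turns the antisymmetry axiom into
`[a_[n], b_[m]] = -[b_[m], a_[n]]`, again by Chu–Vandermonde (for negated upper arguments).
Together with `[x, T y] = T [x, y]` it gives `[T x, y] ∈ Im T`, so the bracket descends to the
quotient, and alternation and Jacobi there follow from antisymmetry and Leibniz.
-/

open Finset Filter

theorem genChoose_eq_choose (n : ℤ) (j : ℕ) : genChoose n j = Ring.choose (n : ℂ) j := by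
  rw [genChoose, Ring.choose_eq_smul, ← Polynomial.aeval_eq_smeval, Polynomial.aeval_def,
    Polynomial.eval₂_eq_eval_map, descPochhammer_map, descPochhammer_eval_eq_prod_range,
    smul_eq_mul, div_eq_inv_mul]

theorem genChoose_mul_choose (n : ℤ) {j s : ℕ} (h : j ≤ s) :
    genChoose n s * s.choose j = genChoose n j * genChoose (n - j) (s - j) := by
  simpa [genChoose_eq_choose, nsmul_eq_mul, mul_comm] using Ring.choose_smul_choose (n : ℂ) h

theorem succ_mul_genChoose_succ (n : ℤ) (j : ℕ) :
    ((j : ℂ) + 1) * genChoose n (j + 1) = (n - j) * genChoose n j := by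
  have h := genChoose_mul_choose n (Nat.le_add_right j 1)
  rw [Nat.choose_succ_self_right, Nat.add_sub_cancel_left, genChoose_eq_choose (n - j),
    Ring.choose_one_right] at h
  push_cast at h
  linear_combination h

theorem genChoose_add (x y : ℤ) (s : ℕ) :
    genChoose (x + y) s = ∑ q ∈ antidiagonal s, genChoose x q.1 * genChoose y q.2 := by
  simpa [genChoose_eq_choose] using
    Ring.add_choose_eq (r := (x : ℂ)) (s := y) s (Commute.all _ _)

theorem genChoose_neg (n : ℤ) (k : ℕ) :
    genChoose n k = (-1) ^ k * genChoose (k - n - 1) k := by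
  have h := Ring.choose_neg (-(n : ℂ)) k
  rw [neg_neg, Units.smul_def, zsmul_eq_mul, Int.cast_negOnePow_natCast] at h
  simp only [genChoose_eq_choose, h]
  push_cast
  ring_nf

theorem sum_antidiagonal_neg_one_pow_mul_genChoose (n m : ℤ) (s : ℕ) :
    ∑ q ∈ antidiagonal s, (-1) ^ (q.1 + 1) * genChoose n q.1 * genChoose (n + m - q.1) q.2
      = -genChoose m s := by
  have hterm : ∀ q ∈ antidiagonal s,
      (-1) ^ (q.1 + 1) * genChoose n q.1 * genChoose (n + m - q.1) q.2
        = (-1) ^ (s + 1) * (genChoose n q.1 * genChoose (s - n - m - 1) q.2) := by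
    intro q hq
    rw [HasAntidiagonal.mem_antidiagonal] at hq
    rw [genChoose_neg (n + m - q.1), ← hq]
    push_cast
    ring_nf
  rw [sum_congr rfl hterm, ← mul_sum, ← genChoose_add, genChoose_neg m]
  ring_nf

theorem sum_range_antidiagonal_eq_sum_range_range {M : Type*} [AddCommMonoid M] {N : ℕ}
    {g : ℕ → ℕ → M} (hg : ∀ i j, N ≤ i + j → g i j = 0) :
    ∑ s ∈ range N, ∑ q ∈ antidiagonal s, g q.1 q.2 = ∑ i ∈ range N, ∑ j ∈ range N, g i j := by
  simp_rw [Nat.sum_antidiagonal_eq_sum_range_succ g, sum_range_diag_flip]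
  refine sum_congr rfl fun i _ ↦ sum_subset (range_subset_range.2 (Nat.sub_le N i)) ?_
  intro j hj hj'
  simp only [mem_range] at hj hj'
  exact hg i j (by omega)

theorem eventually_forall_apply_eq_zero {ι R M N : Type*} [Semiring R] [AddCommMonoid M]
    [Module R M] [AddCommMonoid N] [Module R N] {l : Filter ι} {φ : ι → M →ₗ[R] N}
    (hφ : ∀ x, ∀ᶠ j in l, φ j x = 0) {f : ℕ → M} (hf : ∀ᶠ t in atTop, f t = 0) :
    ∀ᶠ j in l, ∀ t, φ j (f t) = 0 := by
  obtain ⟨T, hT⟩ := eventually_atTop.1 hf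
  filter_upwards [(eventually_all_finset (range T)).2 fun t _ ↦ hφ (f t)] with j hj t
  by_cases ht : t < T
  · exact hj t (mem_range.2 ht)
  · rw [hT t (not_lt.1 ht), map_zero]

open Finsupp

section

variable {L : Type*} [AddCommGroup L] [Module ℂ L]

theorem lieTop_single (D : L →ₗ[ℂ] L) (n : ℤ) (a : L) :
    lieTop D (single n a) = single n (D a) + (n : ℂ) • single (n - 1) a := by
  simp [lieTop]

theorem lieEl_D_apply (D : L →ₗ[ℂ] L) (t : ℤ) (c : L) :
    lieEl D t (D c) = -(t : ℂ) • lieEl D (t - 1) c := by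
  have h : (LinearMap.range (lieTop D)).mkQ (lieTop D (single t c)) = 0 :=
    (Submodule.Quotient.mk_eq_zero _).2 ⟨_, rfl⟩
  rw [lieTop_single, map_add, map_smul] at h
  rw [lieEl, eq_neg_of_add_eq_zero_left h, neg_smul]
  rfl

theorem lieEl_D_pow_apply (D : L →ₗ[ℂ] L) (k : ℕ) (t : ℤ) (c : L) :
    lieEl D t ((D ^ k) c) = ((-1) ^ k * k.factorial * genChoose t k) • lieEl D (t - k) c := by
  induction k generalizing c with
  | zero => simp [genChoose]
  | succ k ih =>
    rw [pow_succ, Module.End.mul_apply, ih, lieEl_D_apply, smul_smul, Nat.factorial_succ,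
      sub_sub]
    push_cast
    congr 1
    linear_combination (-1) ^ k * (k.factorial : ℂ) * succ_mul_genChoose_succ t k

theorem lieEl_smul (D : L →ₗ[ℂ] L) (t : ℤ) (c : ℂ) (x : L) :
    lieEl D t (c • x) = c • lieEl D t x := by
  rw [lieEl, ← smul_single, map_smul, lieEl]

theorem lieEl_sum {ι : Type*} (D : L →ₗ[ℂ] L) (t : ℤ) (s : Finset ι) (x : ι → L) :
    lieEl D t (∑ i ∈ s, x i) = ∑ i ∈ s, lieEl D t (x i) := by
  simp only [lieEl, single_finsetSum, map_sum]

end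

theorem sum_range_succ_mul_genChoose_smul_single {M : Type*} [AddCommGroup M] [Module ℂ M]
    (n p : ℤ) {N : ℕ} {v : ℕ → M} (hv : v N = 0) :
    ∑ j ∈ range (N + 1), ((j : ℂ) * genChoose n j) • single (p - j) (v (j - 1))
      = ∑ j ∈ range (N + 1), ((n - j) * genChoose n j) • single (p - j - 1) (v j) := by
  rw [sum_range_succ', sum_range_succ, hv]
  simp only [Nat.cast_zero, zero_mul, zero_smul, add_zero, single_zero, smul_zero]
  refine sum_congr rfl fun j _ ↦ ?_
  rw [Nat.add_sub_cancel, ← succ_mul_genChoose_succ, sub_sub]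
  push_cast
  rfl

namespace LieStar

variable {L : Type*} [AddCommGroup L] [Module ℂ L] (S : LieStar L)

theorem eventually_mu_eq_zero (a b : L) : ∀ᶠ j in atTop, S.mu j a b = 0 :=
  eventually_atTop.2 (S.finiteness a b)

theorem finite_support_mu (a b : L) : (Function.support fun j ↦ S.mu j a b).Finite := by
  have h := S.eventually_mu_eq_zero a b
  rw [← Nat.cofinite_eq_atTop] at h
  exact eventually_cofinite.1 h

noncomputable def products : L →ₗ[ℂ] L →ₗ[ℂ] (ℕ →₀ L) :=
  LinearMap.mk₂ ℂ (fun a b ↦ ofSupportFinite (fun j ↦ S.mu j a b) (S.finite_support_mu a b))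
    (fun _ _ _ ↦ by ext; simp [ofSupportFinite_coe])
    (fun _ _ _ ↦ by ext; simp [ofSupportFinite_coe])
    (fun _ _ _ ↦ by ext; simp [ofSupportFinite_coe])
    (fun _ _ _ ↦ by ext; simp [ofSupportFinite_coe])

noncomputable def borcherds : (ℤ →₀ L) →ₗ[ℂ] (ℤ →₀ L) →ₗ[ℂ] (ℤ →₀ L) :=
  lsum ℂ fun n ↦ (lsum ℂ fun m ↦ (S.products.compr₂
    (lsum ℂ fun j ↦ genChoose n j • lsingle (n + m - j))).flip).flip

theorem borcherds_single_single_eq_sum {a b : L} {N : ℕ} (h : ∀ j ≥ N, S.mu j a b = 0)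
    (n m : ℤ) : S.borcherds (single n a) (single m b)
      = ∑ j ∈ range N, genChoose n j • single (n + m - j) (S.mu j a b) := by
  rw [borcherds, lsum_single, LinearMap.flip_apply, lsum_single, LinearMap.flip_apply,
    LinearMap.compr₂_apply, lsum_apply]
  refine sum_of_support_subset _ (fun j hj ↦ ?_) _ (fun j _ ↦ by simp)
  by_contra hjN
  exact mem_support_iff.1 hj (h j (by simpa using hjN))

theorem borcherds_single_lieTop_single (n m : ℤ) (a b : L) :
    S.borcherds (single n a) (lieTop S.D (single m b))
      = lieTop S.D (S.borcherds (single n a) (single m b)) := by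
  obtain ⟨N, hN⟩ := eventually_atTop.1
    ((S.eventually_mu_eq_zero a b).and (S.eventually_mu_eq_zero a (S.D b)))
  have hab : ∀ j ≥ N + 1, S.mu j a b = 0 := fun j hj ↦ (hN j (by omega)).1
  have haDb : ∀ j ≥ N + 1, S.mu j a (S.D b) = 0 := fun j hj ↦ (hN j (by omega)).2
  have hshift := sum_range_succ_mul_genChoose_smul_single n (n + m)
    (v := fun j ↦ S.mu j a b) (hN N le_rfl).1
  rw [lieTop_single, map_add, map_smul, S.borcherds_single_single_eq_sum haDb,
    S.borcherds_single_single_eq_sum hab, S.borcherds_single_single_eq_sum hab, map_sum,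
    Finset.smul_sum]
  simp only [S.sesq_right, single_add, smul_add, map_smul, lieTop_single, sum_add_distrib]
  have hderiv :
      ∑ j ∈ range (N + 1), genChoose n j • single (n + m - j) ((j : ℂ) • S.mu (j - 1) a b)
        = ∑ j ∈ range (N + 1), ((j : ℂ) * genChoose n j) • single (n + m - j) (S.mu (j - 1) a b) :=
    sum_congr rfl fun j _ ↦ by rw [← smul_single, smul_smul, mul_comm]
  rw [add_assoc, hderiv, hshift, ← sum_add_distrib]
  congr 1
  refine sum_congr rfl fun j _ ↦ ?_
  rw [show n + (m - 1) - j = n + m - j - 1 by ring]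
  push_cast
  module

theorem borcherds_lieTop (x y : ℤ →₀ L) :
    S.borcherds x (lieTop S.D y) = lieTop S.D (S.borcherds x y) := by
  induction x using Finsupp.induction_linear with
  | zero => simp
  | add x x' hx hx' => simp [hx, hx']
  | single n a =>
    induction y using Finsupp.induction_linear with
    | zero => simp
    | add y y' hy hy' => simp [hy, hy']
    | single m b => exact S.borcherds_single_lieTop_single n m a b

theorem mkQ_borcherds_single_single {a b : L} {N : ℕ} (h : ∀ j ≥ N, S.mu j a b = 0)
    (n m : ℤ) :
    (LinearMap.range (lieTop S.D)).mkQ (S.borcherds (single n a) (single m b))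
      = ∑ j ∈ range N, genChoose n j • lieEl S.D (n + m - j) (S.mu j a b) := by
  simp only [S.borcherds_single_single_eq_sum h, map_sum, map_smul, lieEl]

theorem lieEl_mu_eq_sum {a b : L} {N : ℕ} (h : ∀ j ≥ N, S.mu j b a = 0) (t : ℤ) (j : ℕ) :
    lieEl S.D t (S.mu j a b)
      = ∑ k ∈ range N,
          ((-1) ^ (j + 1) * genChoose t k) • lieEl S.D (t - k) (S.mu (j + k) b a) := by
  rw [S.antisym, finsum_eq_sum_of_support_subset (s := range N), lieEl_sum]
  · refine sum_congr rfl fun k _ ↦ ?_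
    rw [lieEl_smul, lieEl_D_pow_apply, smul_smul]
    congr 1
    have hk : (k.factorial : ℂ) ≠ 0 := by exact_mod_cast k.factorial_ne_zero
    have hsq : ((-1 : ℂ) ^ k) * (-1) ^ k = 1 := by rw [← mul_pow]; norm_num
    field_simp
    rw [show j + k + 1 = j + 1 + k by omega, pow_add]
    linear_combination (genChoose t k * (-1) ^ (j + 1)) * hsq
  · intro k hk
    by_contra hkN
    exact hk (by simp [h (j + k) (by simp at hkN; omega)])

theorem exists_forall_ge_mu_eq_zero (a b : L) :
    ∃ N, (∀ j ≥ N, S.mu j a b = 0) ∧ ∀ j ≥ N, S.mu j b a = 0 :=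
  ((eventually_forall_ge_atTop.2 (S.eventually_mu_eq_zero a b)).and
    (eventually_forall_ge_atTop.2 (S.eventually_mu_eq_zero b a))).exists

theorem borcherds_single_single_add_swap_mem (n m : ℤ) (a b : L) :
    S.borcherds (single n a) (single m b) + S.borcherds (single m b) (single n a)
      ∈ LinearMap.range (lieTop S.D) := by
  obtain ⟨N, hab, hba⟩ := S.exists_forall_ge_mu_eq_zero a b
  rw [← Submodule.Quotient.mk_eq_zero, Submodule.Quotient.mk_add, ← Submodule.mkQ_apply,
    ← Submodule.mkQ_apply, S.mkQ_borcherds_single_single hab,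
    S.mkQ_borcherds_single_single hba, ← eq_neg_iff_add_eq_zero]
  calc ∑ j ∈ range N, genChoose n j • lieEl S.D (n + m - j) (S.mu j a b)
      = ∑ j ∈ range N, ∑ k ∈ range N,
          ((-1) ^ (j + 1) * genChoose n j * genChoose (n + m - j) k)
            • lieEl S.D (n + m - j - k) (S.mu (j + k) b a) := by
        refine sum_congr rfl fun j _ ↦ ?_
        rw [S.lieEl_mu_eq_sum hba, Finset.smul_sum]
        exact sum_congr rfl fun k _ ↦ by rw [smul_smul, mul_left_comm, mul_assoc]
    _ = ∑ s ∈ range N, ∑ q ∈ antidiagonal s,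
          ((-1) ^ (q.1 + 1) * genChoose n q.1 * genChoose (n + m - q.1) q.2)
            • lieEl S.D (n + m - q.1 - q.2) (S.mu (q.1 + q.2) b a) :=
        (sum_range_antidiagonal_eq_sum_range_range fun j k hjk ↦ by
          rw [hba (j + k) hjk, lieEl, single_zero, map_zero, smul_zero]).symm
    _ = -∑ s ∈ range N, genChoose m s • lieEl S.D (m + n - s) (S.mu s b a) := by
        rw [← sum_neg_distrib]
        refine sum_congr rfl fun s _ ↦ ?_
        rw [← neg_smul, ← sum_antidiagonal_neg_one_pow_mul_genChoose n m s, sum_smul]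
        refine sum_congr rfl fun q hq ↦ ?_
        rw [HasAntidiagonal.mem_antidiagonal] at hq
        rw [← hq, Nat.cast_add, show m + n - (q.1 + q.2 : ℤ) = n + m - q.1 - q.2 by ring]

theorem borcherds_add_swap_mem (x y : ℤ →₀ L) :
    S.borcherds x y + S.borcherds y x ∈ LinearMap.range (lieTop S.D) := by
  induction x using Finsupp.induction_linear with
  | zero => simp
  | add x x' hx hx' =>
    convert add_mem hx hx' using 1
    simp only [map_add, LinearMap.add_apply]
    abel
  | single n a =>
    induction y using Finsupp.induction_linear with
    | zero => simp
    | add y y' hy hy' =>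
      convert add_mem hy hy' using 1
      simp only [map_add, LinearMap.add_apply]
      abel
    | single m b => exact S.borcherds_single_single_add_swap_mem n m a b

theorem borcherds_lieTop_mem (x y : ℤ →₀ L) :
    S.borcherds x (lieTop S.D y) ∈ LinearMap.range (lieTop S.D) := by
  rw [borcherds_lieTop]
  exact LinearMap.mem_range_self _ _

theorem borcherds_lieTop_left_mem (x y : ℤ →₀ L) :
    S.borcherds (lieTop S.D x) y ∈ LinearMap.range (lieTop S.D) := by
  simpa using sub_mem (S.borcherds_add_swap_mem (lieTop S.D x) y) (S.borcherds_lieTop_mem y x)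

noncomputable def lieBracket :
    ((ℤ →₀ L) ⧸ LinearMap.range (lieTop S.D)) →ₗ[ℂ]
      ((ℤ →₀ L) ⧸ LinearMap.range (lieTop S.D)) →ₗ[ℂ]
        ((ℤ →₀ L) ⧸ LinearMap.range (lieTop S.D)) :=
  (S.borcherds.compr₂ (LinearMap.range (lieTop S.D)).mkQ).liftQ₂ _ _
    (by
      rintro _ ⟨x, rfl⟩
      exact LinearMap.ext fun y ↦
        (Submodule.Quotient.mk_eq_zero _).2 (S.borcherds_lieTop_left_mem x y))
    (by
      rintro _ ⟨y, rfl⟩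
      exact LinearMap.ext fun x ↦
        (Submodule.Quotient.mk_eq_zero _).2 (S.borcherds_lieTop_mem x y))

theorem lieBracket_mk (x y : ℤ →₀ L) :
    S.lieBracket (Submodule.Quotient.mk x) (Submodule.Quotient.mk y)
      = Submodule.Quotient.mk (S.borcherds x y) := rfl

theorem lieBracket_swap (x y : (ℤ →₀ L) ⧸ LinearMap.range (lieTop S.D)) :
    S.lieBracket x y = -S.lieBracket y x := by
  induction x using Submodule.Quotient.induction_on
  induction y using Submodule.Quotient.induction_on
  rw [eq_neg_iff_add_eq_zero, lieBracket_mk, lieBracket_mk, ← Submodule.Quotient.mk_add,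
    Submodule.Quotient.mk_eq_zero]
  exact S.borcherds_add_swap_mem _ _

theorem lieBracket_self (x : (ℤ →₀ L) ⧸ LinearMap.range (lieTop S.D)) :
    S.lieBracket x x = 0 := by
  have h : (2 : ℂ) • S.lieBracket x x = 0 := by
    rw [two_smul]
    nth_rw 1 [lieBracket_swap]
    exact neg_add_cancel _
  exact (smul_eq_zero.1 h).resolve_left two_ne_zero

theorem eventually_borcherds_single_borcherds_single (n m k : ℤ) (a b c : L) :
    ∀ᶠ N in atTop, S.borcherds (single n a) (S.borcherds (single m b) (single k c))
      = ∑ s ∈ range N, ∑ t ∈ range N, (genChoose n s * genChoose m t)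
          • single (n + m + k - s - t) (S.mu s a (S.mu t b c)) := by
  filter_upwards [eventually_forall_ge_atTop.2 (S.eventually_mu_eq_zero b c),
    eventually_forall_ge_atTop.2 (eventually_forall_apply_eq_zero
      (fun x ↦ S.eventually_mu_eq_zero a x) (S.eventually_mu_eq_zero b c))] with N hbc habc
  have hinner : ∀ t, S.borcherds (single n a) (genChoose m t • single (m + k - t) (S.mu t b c))
      = ∑ s ∈ range N, (genChoose n s * genChoose m t)
          • single (n + m + k - s - t) (S.mu s a (S.mu t b c)) := fun t ↦ by
    rw [map_smul, S.borcherds_single_single_eq_sum (habc · · t), Finset.smul_sum]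
    refine sum_congr rfl fun s _ ↦ ?_
    rw [smul_smul, mul_comm, show n + (m + k - t) - s = n + m + k - s - t by ring]
  rw [S.borcherds_single_single_eq_sum hbc, map_sum]
  simp only [hinner]
  exact Finset.sum_comm

theorem eventually_borcherds_borcherds_single_single (n m k : ℤ) (a b c : L) :
    ∀ᶠ N in atTop, S.borcherds (S.borcherds (single n a) (single m b)) (single k c)
      = ∑ j ∈ range N, ∑ u ∈ range N, (genChoose n j * genChoose (n + m - j) u)
          • single (n + m + k - j - u) (S.mu u (S.mu j a b) c) := by
  filter_upwards [eventually_forall_ge_atTop.2 (S.eventually_mu_eq_zero a b),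
    eventually_forall_ge_atTop.2 (eventually_forall_apply_eq_zero
      (φ := fun u ↦ (S.mu u).flip c) (fun x ↦ S.eventually_mu_eq_zero x c)
      (S.eventually_mu_eq_zero a b))] with N hab habc
  rw [S.borcherds_single_single_eq_sum hab, map_sum, LinearMap.sum_apply]
  refine sum_congr rfl fun j _ ↦ ?_
  rw [map_smul, LinearMap.smul_apply, S.borcherds_single_single_eq_sum (habc · · j),
    Finset.smul_sum]
  refine sum_congr rfl fun u _ ↦ ?_
  rw [smul_smul, show n + m - (j : ℤ) + k - u = n + m + k - j - u by ring]

/-- The common refinement of both sides of the Leibniz identity for `a_n`, `b_m`, `c_k`. -/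
noncomputable def leibnizTerm (n m k : ℤ) (a b c : L) (j i t : ℕ) : ℤ →₀ L :=
  (genChoose n j * genChoose (n - j) i * genChoose m t)
    • single (n + m + k - j - i - t) (S.mu (i + t) (S.mu j a b) c)

theorem smul_single_mu_sub_mu (n m k : ℤ) (a b c : L) (s t : ℕ) :
    (genChoose n s * genChoose m t)
        • single (n + m + k - s - t) (S.mu s a (S.mu t b c) - S.mu t b (S.mu s a c))
      = ∑ q ∈ antidiagonal s, S.leibnizTerm n m k a b c q.1 q.2 t := by
  have hjac : S.mu s a (S.mu t b c) - S.mu t b (S.mu s a c)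
      = ∑ q ∈ antidiagonal s, (s.choose q.1 : ℂ) • S.mu (q.2 + t) (S.mu q.1 a b) c := by
    rw [S.jacobi, finsum_eq_sum_of_support_subset (s := range (s + 1)),
      Nat.sum_antidiagonal_eq_sum_range_succ_mk]
    · exact sum_congr rfl fun j hj ↦ by rw [show s + t - j = s - j + t by simp at hj; omega]
    · intro j hj
      by_contra hjs
      exact hj (by simp [Nat.choose_eq_zero_of_lt (show s < j by simp at hjs; omega)])
  rw [hjac, single_finsetSum, Finset.smul_sum]
  refine sum_congr rfl fun ⟨i, j⟩ hq ↦ ?_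
  rw [HasAntidiagonal.mem_antidiagonal] at hq
  subst hq
  rw [leibnizTerm, ← smul_single, smul_smul, mul_right_comm, genChoose_mul_choose n
    (Nat.le_add_right i j), Nat.add_sub_cancel_left]
  push_cast
  congr 2
  ring

theorem smul_single_mu_mu (n m k : ℤ) (a b c : L) (j u : ℕ) :
    (genChoose n j * genChoose (n + m - j) u)
        • single (n + m + k - j - u) (S.mu u (S.mu j a b) c)
      = ∑ q ∈ antidiagonal u, S.leibnizTerm n m k a b c j q.1 q.2 := by
  rw [show n + m - (j : ℤ) = n - j + m by ring, genChoose_add, Finset.mul_sum, sum_smul]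
  refine sum_congr rfl fun ⟨i, t⟩ hq ↦ ?_
  rw [HasAntidiagonal.mem_antidiagonal] at hq
  subst hq
  rw [leibnizTerm, ← mul_assoc]
  push_cast
  congr 2
  ring

theorem exists_leibnizTerm_eq_zero (n m k : ℤ) (a b c : L) :
    ∃ N, ∀ j i t, N ≤ j ∨ N ≤ i + t → S.leibnizTerm n m k a b c j i t = 0 := by
  obtain ⟨N, hab, habc⟩ := ((eventually_forall_ge_atTop.2 (S.eventually_mu_eq_zero a b)).and
    (eventually_forall_ge_atTop.2 (eventually_forall_apply_eq_zero
      (φ := fun u ↦ (S.mu u).flip c) (fun x ↦ S.eventually_mu_eq_zero x c)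
      (S.eventually_mu_eq_zero a b)))).exists
  refine ⟨N, fun j i t h ↦ ?_⟩
  rcases h with h | h
  · simp [leibnizTerm, hab j h]
  · simpa [leibnizTerm] using Or.inr (habc (i + t) h j)

theorem borcherds_single_leibniz (n m k : ℤ) (a b c : L) :
    S.borcherds (single n a) (S.borcherds (single m b) (single k c))
      = S.borcherds (S.borcherds (single n a) (single m b)) (single k c)
        + S.borcherds (single m b) (S.borcherds (single n a) (single k c)) := by
  obtain ⟨N₀, hX⟩ := S.exists_leibnizTerm_eq_zero n m k a b c
  obtain ⟨N, hN, habc, hbac, habc'⟩ := ((eventually_ge_atTop (2 * N₀)).and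
    ((S.eventually_borcherds_single_borcherds_single n m k a b c).and
    ((S.eventually_borcherds_single_borcherds_single m n k b a c).and
    (S.eventually_borcherds_borcherds_single_single n m k a b c)))).exists
  set X := S.leibnizTerm n m k a b c
  have hcomm : S.borcherds (single n a) (S.borcherds (single m b) (single k c))
      - S.borcherds (single m b) (S.borcherds (single n a) (single k c))
        = ∑ t ∈ range N, ∑ j ∈ range N, ∑ i ∈ range N, X j i t := by
    rw [Finset.sum_comm] at hbac
    rw [habc, hbac, ← sum_sub_distrib]
    have hterm : ∀ s ∈ range N, ∀ t ∈ range N, (genChoose n s * genChoose m t)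
          • single (n + m + k - s - t) (S.mu s a (S.mu t b c))
        - (genChoose m t * genChoose n s) • single (m + n + k - t - s) (S.mu t b (S.mu s a c))
          = ∑ q ∈ antidiagonal s, X q.1 q.2 t := fun s _ t _ ↦ by
      rw [mul_comm (genChoose m t), show m + n + k - t - s = n + m + k - s - t by ring,
        ← smul_sub, ← single_sub, S.smul_single_mu_sub_mu]
    rw [sum_congr rfl fun s hs ↦ by rw [← sum_sub_distrib, sum_congr rfl (hterm s hs)],
      Finset.sum_comm]
    exact sum_congr rfl fun t _ ↦
      sum_range_antidiagonal_eq_sum_range_range fun j i h ↦ hX j i t (by omega)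
  have hassoc : S.borcherds (S.borcherds (single n a) (single m b)) (single k c)
      = ∑ j ∈ range N, ∑ i ∈ range N, ∑ t ∈ range N, X j i t := by
    rw [habc']
    refine sum_congr rfl fun j _ ↦ ?_
    simp only [S.smul_single_mu_mu]
    exact sum_range_antidiagonal_eq_sum_range_range fun i t h ↦ hX j i t (by omega)
  rw [← sub_eq_iff_eq_add, hcomm, hassoc, Finset.sum_comm]
  exact sum_congr rfl fun j _ ↦ Finset.sum_comm

theorem borcherds_leibniz (x y z : ℤ →₀ L) :
    S.borcherds x (S.borcherds y z)
      = S.borcherds (S.borcherds x y) z + S.borcherds y (S.borcherds x z) := by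
  induction x using Finsupp.induction_linear with
  | zero => simp
  | add x x' hx hx' => simp only [map_add, LinearMap.add_apply, hx, hx']; abel
  | single n a =>
    induction y using Finsupp.induction_linear with
    | zero => simp
    | add y y' hy hy' => simp only [map_add, LinearMap.add_apply, hy, hy']; abel
    | single m b =>
      induction z using Finsupp.induction_linear with
      | zero => simp
      | add z z' hz hz' => simp only [map_add, hz, hz']; abel
      | single k c => exact S.borcherds_single_leibniz n m k a b c

theorem lieBracket_leibniz (x y z : (ℤ →₀ L) ⧸ LinearMap.range (lieTop S.D)) :
    S.lieBracket x (S.lieBracket y z)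
      = S.lieBracket (S.lieBracket x y) z + S.lieBracket y (S.lieBracket x z) := by
  induction x using Submodule.Quotient.induction_on
  induction y using Submodule.Quotient.induction_on
  induction z using Submodule.Quotient.induction_on
  simp only [lieBracket_mk]
  rw [S.borcherds_leibniz, Submodule.Quotient.mk_add]

end LieStar

theorem LinearMap.jacobi_of_leibniz {R M : Type*} [CommSemiring R] [AddCommGroup M] [Module R M]
    (B : M →ₗ[R] M →ₗ[R] M) (hswap : ∀ x y, B x y = -B y x)
    (hleib : ∀ x y z, B x (B y z) = B (B x y) z + B y (B x z)) (x y z : M) :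
    B x (B y z) + B y (B z x) + B z (B x y) = 0 := by
  rw [hleib, hswap z x, map_neg, hswap z]
  abel

/-- for a Lie* algebra `L`, the Borcherds bracket
`[a_[n], b_[m]] = Σ_{j≥0} C(n,j)·(μ_j(a,b))_[n+m−j]` is well defined on
`Lie(L) = (L ⊗ ℂ[t,t⁻¹])/Im(∂⊗1 + 1⊗d/dt)` and makes it a Lie algebra over ℂ. -/
theorem stmt10 {L : Type*} [AddCommGroup L] [Module ℂ L] (S : LieStar L) :
    ∃ B : ((ℤ →₀ L) ⧸ LinearMap.range (lieTop S.D)) →ₗ[ℂ]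
        ((ℤ →₀ L) ⧸ LinearMap.range (lieTop S.D)) →ₗ[ℂ]
        ((ℤ →₀ L) ⧸ LinearMap.range (lieTop S.D)),
      (∀ (a b : L) (n m : ℤ),
        B (lieEl S.D n a) (lieEl S.D m b)
          = ∑ᶠ j : ℕ, genChoose n j • lieEl S.D (n + m - (j : ℤ)) (S.mu j a b)) ∧
      (∀ x, B x x = 0) ∧
      (∀ x y z, B x (B y z) + B y (B z x) + B z (B x y) = 0) := by
  refine ⟨S.lieBracket, fun a b n m ↦ ?_, S.lieBracket_self,
    S.lieBracket.jacobi_of_leibniz S.lieBracket_swap S.lieBracket_leibniz⟩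
  obtain ⟨N, hab, -⟩ := S.exists_forall_ge_mu_eq_zero a b
  rw [finsum_eq_sum_of_support_subset (s := range N), ← S.mkQ_borcherds_single_single hab]
  · rfl
  · intro j hj
    by_contra hjN
    exact hj (by simp [hab j (by simpa using hjN), lieEl])
end
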